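/- Let d ≥ 1 and let v₁, …, v_{d+1} ∈ R^d be such that σ := { x ∈ R^d : ⟨v_i, x⟩ ≥ −1 for all 1 ≤ i ≤ d+1 } is a d-dimensional simplex containing the origin in its interior (so that σ° = conv{v₁,…,v_{d+1}} is the polar dual simplex with vertices v₁,…,v_{d+1}). Then for every point p in the interior of σ, vol((σ − p)°) = vol(σ°) / ∏_{i=1}^{d+1} (1 + ⟨v_i, p⟩), where for a set K ⊆ R^d the polar dual is K° = { x ∈ R^d : ⟨x, k⟩ ≥ −1 for all k ∈ K } and vol denotes d-dimensional Lebesgue measure. In particular each factor 1 + ⟨v_i, p⟩ is strictly positive. -/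

import Mathlib

/-!
Translating by `p` keeps `σ` of the same shape: `σ - p = {x | ⟪u i, x⟫ ≥ -1}` with
`u i = (1 + ⟪v i, p⟫)⁻¹ • v i`. For a bounded polyhedron of this shape the polar is the convex
hull of the `u i` (Hahn–Banach), so both polars are simplices. The volume of a simplex is a fixed
constant times `|det|` of its matrix of homogeneous coordinates (rows `(y i, 1)`), and passing
from `v` to `u` scales row `i` by `(1 + ⟪v i, p⟫)⁻¹` up to a unimodular column operation.
-/

open RealInnerProductSpace MeasureTheory

/-- The polar dual `K° = { x : ⟨x, k⟩ ≥ -1 for all k ∈ K }` of a set `K ⊆ ℝ^d`. -/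
def polarDual {d : ℕ} (K : Set (EuclideanSpace ℝ (Fin d))) : Set (EuclideanSpace ℝ (Fin d)) :=
  {x | ∀ k ∈ K, -1 ≤ ⟪x, k⟫}

open Set Bornology Matrix Pointwise

section InnerProductSpace

variable {E ι : Type*} [NormedAddCommGroup E] [InnerProductSpace ℝ E]

theorem one_add_inner_pos_of_mem_interior {a : ι → E} {p : E}
    (hp : p ∈ interior {x | ∀ i, -1 ≤ ⟪a i, x⟫}) (i : ι) : 0 < 1 + ⟪a i, p⟫ := by
  rcases eq_or_ne (a i) 0 with ha | ha
  · simp [ha]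
  have hf : innerSL ℝ (a i) ≠ 0 := by
    rwa [← norm_ne_zero_iff, innerSL_apply_norm, norm_ne_zero_iff]
  have hopen := (ContinuousLinearMap.isOpenMap_of_ne_zero _ hf)
    |>.preimage_interior_eq_interior_preimage (innerSL ℝ (a i)).continuous (Ici (-1))
  rw [interior_Ici] at hopen
  have hsub : {x | ∀ j, -1 ≤ ⟪a j, x⟫} ⊆ innerSL ℝ (a i) ⁻¹' Ici (-1) := fun x hx => hx i
  have : p ∈ innerSL ℝ (a i) ⁻¹' Ioi (-1) := hopen ▸ interior_mono hsub hp
  simp only [mem_preimage, innerSL_apply_apply, mem_Ioi] at this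
  linarith

theorem eq_zero_of_isBounded_of_forall_inner_nonneg {a : ι → E}
    (hb : IsBounded {x | ∀ i, -1 ≤ ⟪a i, x⟫}) {y : E} (hy : ∀ i, 0 ≤ ⟪a i, y⟫) : y = 0 := by
  by_contra hne
  obtain ⟨R, hR⟩ := isBounded_iff_forall_norm_le.1 hb
  have hy0 : 0 < ‖y‖ := norm_pos_iff.2 hne
  have hmem : ((|R| + 1) / ‖y‖) • y ∈ {x | ∀ i, -1 ≤ ⟪a i, x⟫} := fun i => by
    rw [real_inner_smul_right]
    nlinarith [hy i, show 0 ≤ (|R| + 1) / ‖y‖ by positivity]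
  have := hR _ hmem
  rw [norm_smul, Real.norm_of_nonneg (by positivity), div_mul_cancel₀ _ hy0.ne'] at this
  linarith [le_abs_self R]

theorem image_sub_setOf_neg_one_le_inner {a : ι → E} {p : E} (hp : ∀ i, 0 < 1 + ⟪a i, p⟫) :
    (· - p) '' {x | ∀ i, -1 ≤ ⟪a i, x⟫} = {x | ∀ i, -1 ≤ ⟪(1 + ⟪a i, p⟫)⁻¹ • a i, x⟫} := by
  rw [show (· - p) = ⇑(Equiv.subRight p) from rfl, Equiv.image_eq_preimage_symm]
  ext x
  refine forall_congr' fun i => ?_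
  simp only [Equiv.subRight_symm_apply, inner_add_right, real_inner_smul_left,
    le_inv_mul_iff₀ (hp i)]
  constructor <;> intro <;> linarith

end InnerProductSpace

section PolarDual

variable {d : ℕ}

theorem convex_polarDual (K : Set (EuclideanSpace ℝ (Fin d))) : Convex ℝ (polarDual K) := by
  simp only [polarDual, ofPred_forall]
  exact convex_iInter₂ fun k _ => by
    simpa only [real_inner_comm k, ContinuousLinearMap.coe_coe, innerSL_apply_apply] using
      convex_halfSpace_ge (innerSL ℝ k).isLinear (-1)

theorem polarDual_setOf_neg_one_le_inner {ι : Type*} [Finite ι] [Nonempty ι]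
    {a : ι → EuclideanSpace ℝ (Fin d)} (hb : IsBounded {x | ∀ i, -1 ≤ ⟪a i, x⟫}) :
    polarDual {x | ∀ i, -1 ≤ ⟪a i, x⟫} = convexHull ℝ (range a) := by
  refine Subset.antisymm (fun z hz => ?_) (convexHull_min ?_ (convex_polarDual _))
  · by_contra hz'
    obtain ⟨f, s, hfz, hfa⟩ := geometric_hahn_banach_point_closed (convex_convexHull ℝ _)
      ((finite_range a).isCompact_convexHull (𝕜 := ℝ)).isClosed hz'
    set y := (InnerProductSpace.toDual ℝ _).symm f
    have hf : ∀ x, f x = ⟪x, y⟫ := fun x => by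
      rw [real_inner_comm, InnerProductSpace.toDual_symm_apply]
    have hay : ∀ i, s < ⟪a i, y⟫ := fun i => hf (a i) ▸ hfa _ (subset_convexHull ℝ _ ⟨i, rfl⟩)
    -- if `s ≥ 0`, then `y` would be a nonzero direction of recession of the bounded polyhedron
    have hs : s < 0 := by
      by_contra! hs
      obtain ⟨i⟩ := ‹Nonempty ι›
      have := eq_zero_of_isBounded_of_forall_inner_nonneg hb fun i => (hs.trans_lt (hay i)).le
      simpa [this] using hs.trans_lt (hay i)
    have hmem : (-s)⁻¹ • y ∈ {x | ∀ i, -1 ≤ ⟪a i, x⟫} := fun i => by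
      rw [real_inner_smul_right, le_inv_mul_iff₀ (neg_pos.2 hs)]
      linarith [hay i]
    have := hz _ hmem
    rw [real_inner_smul_right, le_inv_mul_iff₀ (neg_pos.2 hs), ← hf] at this
    linarith
  · rintro _ ⟨i, rfl⟩ x hx
    exact hx i

end PolarDual

section HomogeneousMatrix

variable {R : Type*} [CommRing R] {n : ℕ}

def homogeneousMatrix (y : Fin (n + 1) → Fin n → R) : Matrix (Fin (n + 1)) (Fin (n + 1)) R :=
  of fun i => Fin.snoc (α := fun _ => R) (y i) 1

def edgeMatrix (y : Fin (n + 1) → Fin n → R) : Matrix (Fin n) (Fin n) R :=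
  of fun i => y i.castSucc - y (Fin.last n)

theorem det_homogeneousMatrix (y : Fin (n + 1) → Fin n → R) :
    (homogeneousMatrix y).det = (edgeMatrix y).det := by
  rw [← det_submatrix_equiv_self finSumFinEquiv]
  have : (homogeneousMatrix y).submatrix finSumFinEquiv finSumFinEquiv =
      fromBlocks (of fun i => y i.castSucc) (of fun _ _ => 1) (of fun _ => y (Fin.last n)) 1 := by
    ext (i | i) (j | j) <;> simp [homogeneousMatrix, Fin.snoc, Fin.fin_one_eq_zero] <;> rfl
  rw [this, det_fromBlocks_one₂₂]
  congr 1
  ext i j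
  simp [edgeMatrix, Matrix.mul_apply]

theorem det_homogeneousMatrix_updateCol_last (y : Fin (n + 1) → Fin n → R) (p : Fin n → R) :
    ((homogeneousMatrix y).updateCol (Fin.last n) fun i => 1 + y i ⬝ᵥ p).det =
      (homogeneousMatrix y).det := by
  have : (fun i => 1 + y i ⬝ᵥ p) =
      fun i => ∑ j, Fin.snoc (α := fun _ => R) p 1 j • homogeneousMatrix y i j := by
    ext i
    simp [Fin.sum_univ_castSucc, homogeneousMatrix, dotProduct, add_comm, mul_comm]
  rw [this, det_updateCol_sum, Fin.snoc_last, one_smul]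

theorem det_homogeneousMatrix_inv_smul {K : Type*} [Field K] (y : Fin (n + 1) → Fin n → K)
    (p : Fin n → K) (h : ∀ i, 1 + y i ⬝ᵥ p ≠ 0) :
    (homogeneousMatrix fun i => (1 + y i ⬝ᵥ p)⁻¹ • y i).det =
      (∏ i, (1 + y i ⬝ᵥ p))⁻¹ * (homogeneousMatrix y).det := by
  have : (homogeneousMatrix fun i => (1 + y i ⬝ᵥ p)⁻¹ • y i) =
      diagonal (fun i => (1 + y i ⬝ᵥ p)⁻¹) *
        (homogeneousMatrix y).updateCol (Fin.last n) fun i => 1 + y i ⬝ᵥ p := by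
    ext i j
    induction j using Fin.lastCases <;> simp [homogeneousMatrix, h i]
  rw [this, det_mul, det_diagonal, Finset.prod_inv_distrib, det_homogeneousMatrix_updateCol_last]

end HomogeneousMatrix

section Volume

variable {d : ℕ}

noncomputable def unitSimplexVertices (d : ℕ) : Fin (d + 1) → EuclideanSpace ℝ (Fin d) :=
  Fin.snoc (fun i => EuclideanSpace.single i 1) 0

theorem volume_convexHull_range (y : Fin (d + 1) → EuclideanSpace ℝ (Fin d)) :
    volume (convexHull ℝ (range y)) =
      ENNReal.ofReal |(homogeneousMatrix fun i => y i).det| *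
        volume (convexHull ℝ (range (unitSimplexVertices d))) := by
  set L := toLpLin 2 2 (edgeMatrix fun i => y i)ᵀ
  have hy : range y = y (Fin.last d) +ᵥ L '' range (unitSimplexVertices d) := by
    rw [← range_comp, vadd_set_range]
    congr 1
    ext i : 1
    induction i using Fin.lastCases with
    | last => simp [unitSimplexVertices]
    | cast i =>
      ext j
      simp [L, unitSimplexVertices, edgeMatrix, toLpLin_apply]
  rw [hy, convexHull_vadd, ← LinearMap.image_convexHull, measure_vadd,
    Measure.addHaar_image_linearMap, det_homogeneousMatrix]
  simp only [L, toLpLin_eq_toLin, LinearMap.det_toLin, det_transpose]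

end Volume

theorem statement9_general (d : ℕ) (v : Fin (d + 1) → EuclideanSpace ℝ (Fin d))
    (w : Fin (d + 1) → EuclideanSpace ℝ (Fin d))
    (hsimplex : {x : EuclideanSpace ℝ (Fin d) | ∀ i, -1 ≤ ⟪v i, x⟫}
      = convexHull ℝ (Set.range w))
    (p : EuclideanSpace ℝ (Fin d))
    (hp : p ∈ interior {x : EuclideanSpace ℝ (Fin d) | ∀ i, -1 ≤ ⟪v i, x⟫}) :
    (∀ i, 0 < 1 + ⟪v i, p⟫) ∧
    (volume (polarDual
        ((fun x => x - p) '' {x : EuclideanSpace ℝ (Fin d) | ∀ i, -1 ≤ ⟪v i, x⟫}))).toReal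
      = (volume (polarDual {x : EuclideanSpace ℝ (Fin d) | ∀ i, -1 ≤ ⟪v i, x⟫})).toReal
        / ∏ i, (1 + ⟪v i, p⟫) := by
  set σ := {x : EuclideanSpace ℝ (Fin d) | ∀ i, -1 ≤ ⟪v i, x⟫}
  have hσ : IsCompact σ := hsimplex ▸ (finite_range w).isCompact_convexHull (𝕜 := ℝ)
  have ht := one_add_inner_pos_of_mem_interior hp
  refine ⟨ht, ?_⟩
  have hshift := image_sub_setOf_neg_one_le_inner ht
  have hσp : IsBounded ((· - p) '' σ) := (hσ.image (continuous_sub_right p)).isBounded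
  rw [polarDual_setOf_neg_one_le_inner hσ.isBounded, hshift,
    polarDual_setOf_neg_one_le_inner (hshift ▸ hσp), volume_convexHull_range v,
    volume_convexHull_range]
  have hinner : ∀ i, ⟪v i, p⟫ = v i ⬝ᵥ p := fun i => by
    simp [EuclideanSpace.inner_eq_star_dotProduct, dotProduct_comm]
  have hdet := det_homogeneousMatrix_inv_smul (fun i => v i) p fun i => hinner i ▸ (ht i).ne'
  have hprod : 0 < ∏ i, (1 + ⟪v i, p⟫) := Finset.prod_pos fun i _ => ht i
  simp only [hinner, WithLp.ofLp_smul, hdet] at hprod ⊢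
  rw [abs_mul, abs_inv, abs_of_pos hprod, ENNReal.toReal_mul, ENNReal.toReal_mul,
    ENNReal.toReal_ofReal (by positivity), ENNReal.toReal_ofReal (abs_nonneg _)]
  ring

/-- Let `σ = { x ∈ ℝ^d : ⟨v i, x⟩ ≥ -1 for all i }` be a
`d`-dimensional simplex (the convex hull of `d+1` affinely independent points) with
the origin in its interior. Then for every `p` in the interior of `σ`,
`vol((σ - p)°) = vol(σ°) / ∏ i (1 + ⟨v i, p⟩)`, and each factor `1 + ⟨v i, p⟩` is
strictly positive. -/
theorem statement9 (d : ℕ) (hd : 1 ≤ d) (v : Fin (d + 1) → EuclideanSpace ℝ (Fin d))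
    (w : Fin (d + 1) → EuclideanSpace ℝ (Fin d)) (hw : AffineIndependent ℝ w)
    (hsimplex : {x : EuclideanSpace ℝ (Fin d) | ∀ i, -1 ≤ ⟪v i, x⟫}
      = convexHull ℝ (Set.range w))
    (h0 : (0 : EuclideanSpace ℝ (Fin d)) ∈
      interior {x : EuclideanSpace ℝ (Fin d) | ∀ i, -1 ≤ ⟪v i, x⟫})
    (p : EuclideanSpace ℝ (Fin d))
    (hp : p ∈ interior {x : EuclideanSpace ℝ (Fin d) | ∀ i, -1 ≤ ⟪v i, x⟫}) :
    (∀ i, 0 < 1 + ⟪v i, p⟫) ∧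
    (volume (polarDual
        ((fun x => x - p) '' {x : EuclideanSpace ℝ (Fin d) | ∀ i, -1 ≤ ⟪v i, x⟫}))).toReal
      = (volume (polarDual {x : EuclideanSpace ℝ (Fin d) | ∀ i, -1 ≤ ⟪v i, x⟫})).toReal
        / ∏ i, (1 + ⟪v i, p⟫) :=
  statement9_general d v w hsimplex p hp
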